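/- arXiv:2412.10221 — 4 statements merged into one kernel-verified Lean document; each statement's English description precedes it below -/
import Mathlib

section
/- Every separable Baire topological linear space E (a real topological vector space, not necessarily locally convex) is Weak Asplund: every continuous convex function f : D → ℝ defined on a nonempty open convex subset D of E is Gâteaux differentiable at every point of some dense Gδ subset of D. -/
open Filter Topology Bornology TopologicalSpace

section Definitions

variable {E : Type*} [AddCommGroup E] [Module ℝ E] [TopologicalSpace E]

/-- A function `f` (thought of as a convex function on an open convex set containing `x₀`)
is Gâteaux differentiable at `x₀` if there is a continuous linear functional `L` such that
for every direction `x` and every `ε > 0` there is `δ > 0` with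
`|(f (x₀ + t • x) - f x₀) / t - L x| < ε` whenever `0 < |t| < δ`. -/
def GateauxDiffAt (f : E → ℝ) (x₀ : E) : Prop :=
  ∃ L : E →L[ℝ] ℝ, ∀ x : E, ∀ ε : ℝ, 0 < ε → ∃ δ : ℝ, 0 < δ ∧ ∀ t : ℝ,
    0 < |t| → |t| < δ → |(f (x₀ + t • x) - f x₀) / t - L x| < ε

/-- A function `f` is Fréchet differentiable at `x₀` if there is a continuous linear
functional `L` such that for every (von Neumann) bounded set `B` and every `ε > 0` there is
`δ > 0` with `|(f (x₀ + t • x) - f x₀) / t - L x| < ε` for all `x ∈ B`, whenever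
`0 < |t| < δ`. -/
def FrechetDiffAt (f : E → ℝ) (x₀ : E) : Prop :=
  ∃ L : E →L[ℝ] ℝ, ∀ B : Set E, IsVonNBounded ℝ B → ∀ ε : ℝ, 0 < ε →
    ∃ δ : ℝ, 0 < δ ∧ ∀ t : ℝ, 0 < |t| → |t| < δ →
      ∀ x ∈ B, |(f (x₀ + t • x) - f x₀) / t - L x| < ε

end Definitions

/-- `E` is Weak Asplund: every continuous convex function on a nonempty open convex set `D`
is Gâteaux differentiable at every point of a set which is a dense `Gδ` subset of `D`. -/
def IsWeakAsplund (E : Type*) [AddCommGroup E] [Module ℝ E] [TopologicalSpace E] : Prop :=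
  ∀ (D : Set E) (f : E → ℝ), D.Nonempty → IsOpen D → Convex ℝ D →
    ContinuousOn f D → ConvexOn ℝ D f →
    ∃ G : Set E, G ⊆ D ∧ IsGδ (Subtype.val ⁻¹' G : Set D) ∧
      Dense (Subtype.val ⁻¹' G : Set D) ∧ ∀ x ∈ G, GateauxDiffAt f x

/-! Fix `x ∈ D` and let `p v = f'(x; v)` be the right derivative of `t ↦ f (x + t • v)` at `0`.
Convexity makes `p` subadditive with `p v + p (-v) ≥ 0`, and continuity of `f` at `x` bounds `p`
from above near `0`, so `p` is continuous. If `p` is odd it is linear, and `f` is then Gâteaux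
differentiable at `x` with derivative `p`; by continuity, oddness only has to be checked along a
dense sequence `v n`. For fixed `v` and `ε > 0`, the points where some symmetric second difference
`f (y + t • v) + f (y - t • v) - 2 * f y` is below `ε * t` form an open set on which
`p v + p (-v) < ε`. It is dense in `D`, since a convex function of one real variable is
differentiable somewhere on every interval (it is locally Lipschitz, hence differentiable almost
everywhere). Intersecting these sets over `v n` and `ε = 1 / (m + 1)` inside the Baire space `D`
gives the required dense Gδ. -/

open Set

open MeasureTheory in
lemma ConvexOn.exists_differentiableAt_mem_Ioo {g : ℝ → ℝ} {a b : ℝ}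
    (hg : ConvexOn ℝ (Ioo a b) g) (hab : a < b) :
    ∃ s ∈ Ioo a b, DifferentiableAt ℝ g s := by
  obtain ⟨c, hc⟩ := nonempty_Ioo.2 hab
  obtain ⟨K, t, ht, hK⟩ := hg.locallyLipschitzOn isOpen_Ioo hc
  rw [isOpen_Ioo.nhdsWithin_eq hc] at ht
  obtain ⟨a', b', hc', hsub⟩ :=
    mem_nhds_iff_exists_Ioo_subset.1 (inter_mem ht (isOpen_Ioo.mem_nhds hc))
  have hae := (hK.mono (hsub.trans inter_subset_left)).ae_differentiableWithinAt_real
    measurableSet_Ioo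
  have : (ae (volume.restrict (Ioo a' b'))).NeBot := by
    rw [ae_neBot, Ne, Measure.restrict_eq_zero, Real.volume_Ioo, ENNReal.ofReal_eq_zero, not_le,
      sub_pos]
    exact hc'.1.trans hc'.2
  obtain ⟨s, hds, hs⟩ := (hae.and (ae_restrict_mem measurableSet_Ioo)).exists
  exact ⟨s, (hsub hs).2, hds.differentiableAt (isOpen_Ioo.mem_nhds hs)⟩

lemma continuous_of_subadditive_of_eventually_lt {G : Type*} [TopologicalSpace G] [AddGroup G]
    [IsTopologicalAddGroup G] {p : G → ℝ} (hadd : ∀ u v, p (u + v) ≤ p u + p v)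
    (hsmall : ∀ ε > 0, ∀ᶠ v in 𝓝 0, p v < ε) : Continuous p := by
  refine continuous_iff_continuousAt.2 fun u => Metric.tendsto_nhds.2 fun ε hε => ?_
  rw [← map_add_left_nhds_zero, eventually_map]
  have hneg : Tendsto (fun v : G => -v) (𝓝 0) (𝓝 0) := by simpa using tendsto_neg (0 : G)
  filter_upwards [hsmall ε hε, hneg.eventually (hsmall ε hε)] with v hv hv'
  have hback := hadd (u + v) (-v)
  rw [add_neg_cancel_right] at hback
  rw [Real.dist_eq, abs_lt]
  constructor <;> linarith [hadd u v]

section Module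

variable {E : Type*} [AddCommGroup E] [Module ℝ E]

noncomputable def rightLineDeriv (f : E → ℝ) (x v : E) : ℝ :=
  derivWithin (fun t : ℝ => f (x + t • v)) (Ioi 0) 0

lemma hasDerivAt_line_smul {f : E → ℝ} {x v : E} {d : ℝ}
    (h : HasDerivAt (fun t : ℝ => f (x + t • v)) d 0) (c : ℝ) :
    HasDerivAt (fun t : ℝ => f (x + t • c • v)) (c * d) 0 := by
  rw [← mul_zero c] at h
  simpa only [Function.comp_def, smul_smul, mul_comm c, smul_eq_mul, one_mul] using
    h.scomp (0 : ℝ) ((hasDerivAt_id (0 : ℝ)).const_mul c)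

lemma rightLineDeriv_eq_of_hasDerivAt {f : E → ℝ} {x v : E} {d : ℝ}
    (h : HasDerivAt (fun t : ℝ => f (x + t • v)) d 0) : rightLineDeriv f x v = d :=
  h.hasDerivWithinAt.derivWithin (uniqueDiffWithinAt_Ioi 0)

lemma rightLineDeriv_add_neg_eq_zero_of_differentiableAt {f : E → ℝ} {x v : E}
    (h : DifferentiableAt ℝ (fun t : ℝ => f (x + t • v)) 0) :
    rightLineDeriv f x v + rightLineDeriv f x (-v) = 0 := by
  rw [rightLineDeriv_eq_of_hasDerivAt h.hasDerivAt,
    rightLineDeriv_eq_of_hasDerivAt (by simpa using hasDerivAt_line_smul h.hasDerivAt (-1)),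
    add_neg_cancel]

lemma gateauxDiffAt_of_hasDerivAt [TopologicalSpace E] {f : E → ℝ} {x : E} (L : E →L[ℝ] ℝ)
    (hL : ∀ v, HasDerivAt (fun t : ℝ => f (x + t • v)) (L v) 0) : GateauxDiffAt f x := by
  refine ⟨L, fun v ε hε => ?_⟩
  obtain ⟨δ, hδ, h⟩ := Metric.tendsto_nhdsWithin_nhds.1 (hL v).tendsto_slope_zero ε hε
  refine ⟨δ, hδ, fun t ht htδ => ?_⟩
  have := h (abs_pos.1 ht) (by simpa using htδ)
  simpa [Real.dist_eq, div_eq_inv_mul] using this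

lemma ConvexOn.comp_line {D : Set E} {f : E → ℝ} (hf : ConvexOn ℝ D f) (x v : E) :
    ConvexOn ℝ {t : ℝ | x + t • v ∈ D} (fun t => f (x + t • v)) := by
  have hline : ∀ t : ℝ, AffineMap.lineMap x (x + v) t = x + t • v := fun t => by
    simp [AffineMap.lineMap_apply, add_comm]
  simpa only [preimage, Function.comp_def, hline] using
    hf.comp_affineMap (AffineMap.lineMap x (x + v))

/-- An open stand-in for `{y | rightLineDeriv f y v + rightLineDeriv f y (-v) < ε}`, whose
openness is not evident. -/
def secondDiffLtSet (D : Set E) (f : E → ℝ) (v : E) (ε : ℝ) : Set E :=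
  {y ∈ D | ∃ t > 0, y + t • v ∈ D ∧ y - t • v ∈ D ∧
    f (y + t • v) + f (y - t • v) - 2 * f y < ε * t}

lemma isOpen_secondDiffLtSet [TopologicalSpace E] [IsTopologicalAddGroup E] {D : Set E}
    {f : E → ℝ} (hD : IsOpen D) (hfc : ContinuousOn f D) (v : E) (ε : ℝ) :
    IsOpen (secondDiffLtSet D f v ε) := by
  refine isOpen_iff_mem_nhds.2 fun y ⟨hy, t, ht, hp, hm, hlt⟩ => ?_
  have hcont : ∀ z ∈ D, ContinuousAt f z := fun z hz => hfc.continuousAt (hD.mem_nhds hz)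
  have hp' : ContinuousAt (fun z => z + t • v) y := (continuous_add_const _).continuousAt
  have hm' : ContinuousAt (fun z => z - t • v) y :=
    (continuous_id.sub continuous_const).continuousAt
  have hsum : ContinuousAt (fun z => f (z + t • v) + f (z - t • v) - 2 * f z) y :=
    ((ContinuousAt.comp (f := fun z => z + t • v) (hcont _ hp) hp').add
      (ContinuousAt.comp (f := fun z => z - t • v) (hcont _ hm) hm')).sub
      ((hcont y hy).const_mul 2)
  filter_upwards [hD.mem_nhds hy, hp'.eventually (hD.mem_nhds hp),
    hm'.eventually (hD.mem_nhds hm), hsum.eventually (gt_mem_nhds hlt)] with z hz hzp hzm hzlt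
  exact ⟨hz, t, ht, hzp, hzm, hzlt⟩

end Module

section ContinuousLine

variable {E : Type*} [AddCommGroup E] [Module ℝ E] [TopologicalSpace E] [ContinuousAdd E]
  [ContinuousSMul ℝ E] {D : Set E} {f : E → ℝ} {x : E}

lemma eventually_line_mem (hD : IsOpen D) (hx : x ∈ D) (v : E) :
    ∀ᶠ t : ℝ in 𝓝 0, x + t • v ∈ D :=
  (hD.preimage (by fun_prop)).mem_nhds (by simpa using hx)

lemma zero_mem_interior_line (hD : IsOpen D) (hx : x ∈ D) (v : E) :
    (0 : ℝ) ∈ interior {t : ℝ | x + t • v ∈ D} :=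
  mem_interior_iff_mem_nhds.2 (eventually_line_mem hD hx v)

lemma ConvexOn.hasDerivWithinAt_rightLineDeriv (hf : ConvexOn ℝ D f) (hD : IsOpen D)
    (hx : x ∈ D) (v : E) :
    HasDerivWithinAt (fun t : ℝ => f (x + t • v)) (rightLineDeriv f x v) (Ioi 0) 0 :=
  (hf.comp_line x v).hasDerivWithinAt_rightDeriv_of_mem_interior (zero_mem_interior_line hD hx v)

lemma ConvexOn.hasDerivWithinAt_Iio_neg_rightLineDeriv_neg (hf : ConvexOn ℝ D f) (hD : IsOpen D)
    (hx : x ∈ D) (v : E) :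
    HasDerivWithinAt (fun t : ℝ => f (x + t • v)) (-rightLineDeriv f x (-v)) (Iio 0) 0 := by
  have h := hf.hasDerivWithinAt_rightLineDeriv hD hx (-v)
  rw [← neg_zero] at h
  have := h.comp (0 : ℝ) (hasDerivAt_neg 0).hasDerivWithinAt fun t (ht : t ∈ Iio 0) => by
    simpa using ht
  simpa only [Function.comp_def, neg_smul, smul_neg, neg_neg, mul_neg, mul_one] using this

lemma ConvexOn.rightLineDeriv_add_neg_nonneg (hf : ConvexOn ℝ D f) (hD : IsOpen D)
    (hx : x ∈ D) (v : E) : 0 ≤ rightLineDeriv f x v + rightLineDeriv f x (-v) := by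
  have h := (hf.comp_line x v).leftDeriv_le_rightDeriv_of_mem_interior
    (zero_mem_interior_line hD hx v)
  rw [(hf.hasDerivWithinAt_Iio_neg_rightLineDeriv_neg hD hx v).derivWithin
    (uniqueDiffWithinAt_Iio 0)] at h
  exact neg_le_iff_add_nonneg.1 h

lemma ConvexOn.rightLineDeriv_le_slope (hf : ConvexOn ℝ D f) (hD : IsOpen D) (hx : x ∈ D)
    {v : E} {t : ℝ} (ht : 0 < t) (htD : x + t • v ∈ D) :
    rightLineDeriv f x v ≤ (f (x + t • v) - f x) / t := by
  simpa only [rightLineDeriv, slope_def_field, zero_smul, add_zero, sub_zero] using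
    (hf.comp_line x v).rightDeriv_le_slope_of_mem_interior
    (zero_mem_interior_line hD hx v) htD ht

lemma ConvexOn.hasDerivAt_of_rightLineDeriv_neg (hf : ConvexOn ℝ D f) (hD : IsOpen D)
    (hx : x ∈ D) {v : E} (hv : rightLineDeriv f x (-v) = -rightLineDeriv f x v) :
    HasDerivAt (fun t : ℝ => f (x + t • v)) (rightLineDeriv f x v) 0 := by
  have hleft := hf.hasDerivWithinAt_Iio_neg_rightLineDeriv_neg hD hx v
  rw [hv, neg_neg] at hleft
  have hright := hf.hasDerivWithinAt_rightLineDeriv hD hx v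
  rw [hasDerivAt_iff_tendsto_slope_left_right]
  exact ⟨(hasDerivWithinAt_iff_tendsto_slope' self_notMem_Iio).1 hleft,
    (hasDerivWithinAt_iff_tendsto_slope' self_notMem_Ioi).1 hright⟩

lemma ConvexOn.tendsto_slope_rightLineDeriv (hf : ConvexOn ℝ D f) (hD : IsOpen D)
    (hx : x ∈ D) (v : E) :
    Tendsto (fun t : ℝ => (f (x + t • v) - f x) / t) (𝓝[>] 0) (𝓝 (rightLineDeriv f x v)) := by
  simpa only [slope_fun_def_field, zero_smul, add_zero, sub_zero] using
    (hasDerivWithinAt_iff_tendsto_slope' self_notMem_Ioi).1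
      (hf.hasDerivWithinAt_rightLineDeriv hD hx v)

lemma ConvexOn.rightLineDeriv_add_le (hf : ConvexOn ℝ D f) (hD : IsOpen D) (hx : x ∈ D)
    (u v : E) : rightLineDeriv f x (u + v) ≤ rightLineDeriv f x u + rightLineDeriv f x v := by
  have hdouble : Tendsto (fun t : ℝ => 2 * t) (𝓝[>] 0) (𝓝[>] 0) :=
    tendsto_nhdsWithin_of_tendsto_nhds_of_eventually_within _
      (((continuous_const_mul (2 : ℝ)).tendsto' 0 0 (mul_zero 2)).mono_left nhdsWithin_le_nhds)
      (eventually_nhdsWithin_of_forall fun t (ht : 0 < t) => by simp only [mem_Ioi]; linarith)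
  have hsum := ((hf.tendsto_slope_rightLineDeriv hD hx u).comp hdouble).add
    ((hf.tendsto_slope_rightLineDeriv hD hx v).comp hdouble)
  refine le_of_tendsto_of_tendsto (hf.tendsto_slope_rightLineDeriv hD hx (u + v)) hsum ?_
  have hmem : ∀ w : E, ∀ᶠ t in 𝓝[>] (0 : ℝ), x + (2 * t) • w ∈ D := fun w =>
    hdouble.eventually (nhdsWithin_le_nhds (eventually_line_mem hD hx w))
  filter_upwards [hmem u, hmem v, self_mem_nhdsWithin] with t hu hv (ht : 0 < t)
  have hmid :
      x + t • (u + v) = (1 / 2 : ℝ) • (x + (2 * t) • u) + (1 / 2 : ℝ) • (x + (2 * t) • v) := by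
    module
  have hconv := hf.2 hu hv (by norm_num : (0 : ℝ) ≤ 1 / 2) (by norm_num : (0 : ℝ) ≤ 1 / 2)
    (by norm_num)
  rw [← hmid, smul_eq_mul, smul_eq_mul] at hconv
  simp only [Function.comp_apply]
  rw [← add_div, div_le_div_iff₀ ht (by positivity)]
  nlinarith [mul_le_mul_of_nonneg_left hconv ht.le]

lemma ConvexOn.eventually_rightLineDeriv_lt (hf : ConvexOn ℝ D f) (hD : IsOpen D) (hx : x ∈ D)
    (hfx : ContinuousAt f x) {ε : ℝ} (hε : 0 < ε) : ∀ᶠ v in 𝓝 0, rightLineDeriv f x v < ε := by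
  have hshift : Tendsto (fun v : E => x + v) (𝓝 0) (𝓝 x) := by
    simpa using (continuous_const_add x).tendsto 0
  filter_upwards [hshift.eventually (hD.eventually_mem hx),
    hshift.eventually (hfx.eventually (gt_mem_nhds (lt_add_of_pos_right (f x) hε)))] with v hv hfv
  have := hf.rightLineDeriv_le_slope hD hx one_pos (by simpa using hv)
  simp only [one_smul, div_one] at this
  linarith

lemma ConvexOn.rightLineDeriv_add_neg_lt_of_mem_secondDiffLtSet (hf : ConvexOn ℝ D f)
    (hD : IsOpen D) {v : E} {ε : ℝ} (hx : x ∈ secondDiffLtSet D f v ε) :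
    rightLineDeriv f x v + rightLineDeriv f x (-v) < ε := by
  obtain ⟨hxD, t, ht, hp, hm, hlt⟩ := hx
  have hm' : x + t • -v ∈ D := by rwa [smul_neg, ← sub_eq_add_neg]
  have h1 := hf.rightLineDeriv_le_slope hD hxD ht hp
  have h2 := hf.rightLineDeriv_le_slope hD hxD ht hm'
  rw [smul_neg, ← sub_eq_add_neg] at h2
  have hsum : (f (x + t • v) - f x) / t + (f (x - t • v) - f x) / t < ε := by
    rw [← add_div, div_lt_iff₀ ht]
    linarith
  linarith

lemma ConvexOn.mem_secondDiffLtSet_of_rightLineDeriv_add_neg_lt (hf : ConvexOn ℝ D f)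
    (hD : IsOpen D) (hx : x ∈ D) {v : E} {ε : ℝ}
    (hlt : rightLineDeriv f x v + rightLineDeriv f x (-v) < ε) :
    x ∈ secondDiffLtSet D f v ε := by
  have hslopes := (hf.tendsto_slope_rightLineDeriv hD hx v).add
    (hf.tendsto_slope_rightLineDeriv hD hx (-v))
  obtain ⟨t, ⟨hslt, hp, hm⟩, ht : 0 < t⟩ := (((hslopes.eventually (gt_mem_nhds hlt)).and
    (nhdsWithin_le_nhds ((eventually_line_mem hD hx v).and (eventually_line_mem hD hx (-v))))).and
    self_mem_nhdsWithin).exists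
  refine ⟨hx, t, ht, hp, by rwa [smul_neg, ← sub_eq_add_neg] at hm, ?_⟩
  rw [smul_neg, ← sub_eq_add_neg, ← add_div, div_lt_iff₀ ht] at hslt
  linarith

lemma ConvexOn.subset_closure_secondDiffLtSet (hf : ConvexOn ℝ D f) (hD : IsOpen D) (v : E)
    {ε : ℝ} (hε : 0 < ε) : D ⊆ closure (secondDiffLtSet D f v ε) := by
  intro y hy
  refine mem_closure_iff.2 fun W hW hyW => ?_
  obtain ⟨η, hη, hball⟩ := Metric.isOpen_iff.1 ((hW.inter hD).preimage
    (by fun_prop : Continuous fun t : ℝ => y + t • v)) 0 (by simpa using ⟨hyW, hy⟩)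
  rw [Real.ball_eq_Ioo, zero_sub, zero_add] at hball
  obtain ⟨s, hs, hdiff⟩ := ((hf.comp_line y v).subset (fun t ht => (hball ht).2)
    (convex_Ioo _ _)).exists_differentiableAt_mem_Ioo (neg_lt_self hη)
  obtain ⟨hzW, hzD⟩ := hball hs
  refine ⟨y + s • v, hzW, hf.mem_secondDiffLtSet_of_rightLineDeriv_add_neg_lt hD hzD ?_⟩
  have hshift : DifferentiableAt ℝ (fun t : ℝ => f (y + s • v + t • v)) 0 := by
    have := (differentiableAt_comp_add_const (a := (0 : ℝ)) (b := s)).2 (by simpa using hdiff)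
    simpa only [add_smul, add_assoc, add_comm (s • v)] using this
  rw [rightLineDeriv_add_neg_eq_zero_of_differentiableAt hshift]
  exact hε

end ContinuousLine

section TopologicalAddGroup

variable {E : Type*} [AddCommGroup E] [Module ℝ E] [TopologicalSpace E] [IsTopologicalAddGroup E]
  [ContinuousSMul ℝ E] {D : Set E} {f : E → ℝ} {x : E}

lemma ConvexOn.continuous_rightLineDeriv (hf : ConvexOn ℝ D f)
    (hD : IsOpen D) (hx : x ∈ D) (hfx : ContinuousAt f x) : Continuous (rightLineDeriv f x) :=
  continuous_of_subadditive_of_eventually_lt (hf.rightLineDeriv_add_le hD hx)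
    fun _ hε => hf.eventually_rightLineDeriv_lt hD hx hfx hε

lemma ConvexOn.gateauxDiffAt_of_rightLineDeriv_neg (hf : ConvexOn ℝ D f) (hD : IsOpen D)
    (hx : x ∈ D) (hfx : ContinuousAt f x)
    (hodd : ∀ v, rightLineDeriv f x (-v) = -rightLineDeriv f x v) : GateauxDiffAt f x := by
  have hderiv := fun v => hf.hasDerivAt_of_rightLineDeriv_neg hD hx (hodd v)
  let L : E →L[ℝ] ℝ :=
    { toFun := rightLineDeriv f x
      map_add' := fun u v => by
        have hback := hf.rightLineDeriv_add_le hD hx (u + v) (-v)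
        rw [add_neg_cancel_right, hodd] at hback
        linarith [hf.rightLineDeriv_add_le hD hx u v]
      map_smul' := fun c v =>
        rightLineDeriv_eq_of_hasDerivAt (hasDerivAt_line_smul (hderiv v) c)
      cont := hf.continuous_rightLineDeriv hD hx hfx }
  exact gateauxDiffAt_of_hasDerivAt L hderiv

lemma ConvexOn.gateauxDiffAt_of_denseRange {ι : Type*} {v : ι → E} (hv : DenseRange v)
    (hf : ConvexOn ℝ D f) (hD : IsOpen D) (hx : x ∈ D) (hfx : ContinuousAt f x)
    (h : ∀ i, rightLineDeriv f x (v i) + rightLineDeriv f x (-v i) ≤ 0) : GateauxDiffAt f x := by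
  have hcont := hf.continuous_rightLineDeriv hD hx hfx
  refine hf.gateauxDiffAt_of_rightLineDeriv_neg hD hx hfx fun w => ?_
  have hle : rightLineDeriv f x w + rightLineDeriv f x (-w) ≤ 0 :=
    hv.induction_on w (isClosed_le (hcont.add (hcont.comp continuous_neg)) continuous_const) h
  linarith [hf.rightLineDeriv_add_neg_nonneg hD hx w]

end TopologicalAddGroup

theorem weakAsplund_of_separable_baire_general (E : Type*) [AddCommGroup E] [Module ℝ E]
    [TopologicalSpace E] [IsTopologicalAddGroup E] [ContinuousSMul ℝ E]
    [SeparableSpace E] [BaireSpace E] :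
    IsWeakAsplund E := by
  intro D f _ hD _ hfc hf
  obtain ⟨v, hv⟩ := exists_dense_seq E
  have := hD.baireSpace
  let U : ℕ × ℕ → Set E := fun q => secondDiffLtSet D f (v q.1) (1 / (q.2 + 1))
  have hUD : ∀ q, U q ⊆ D := fun q => sep_subset _ _
  have hUopen : ∀ q, IsOpen (Subtype.val ⁻¹' U q : Set D) := fun q =>
    (isOpen_secondDiffLtSet hD hfc _ _).preimage continuous_subtype_val
  have hUdense : ∀ q, Dense (Subtype.val ⁻¹' U q : Set D) := fun q => by
    rw [Subtype.dense_iff, Subtype.image_preimage_coe, inter_eq_right.2 (hUD q)]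
    exact hf.subset_closure_secondDiffLtSet hD _ Nat.one_div_pos_of_nat
  refine ⟨⋂ q, U q, (iInter_subset _ (0, 0)).trans (hUD _), ?_, ?_, fun x hx => ?_⟩
  · rw [preimage_iInter]
    exact IsGδ.iInter_of_isOpen hUopen
  · rw [preimage_iInter]
    exact dense_iInter_of_isOpen hUopen hUdense
  have hxD : x ∈ D := hUD (0, 0) (mem_iInter.1 hx _)
  refine hf.gateauxDiffAt_of_denseRange hv hD hxD (hfc.continuousAt (hD.mem_nhds hxD)) fun n => ?_
  refine le_of_forall_gt fun ε hε => ?_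
  obtain ⟨m, hm⟩ := exists_nat_one_div_lt hε
  exact (hf.rightLineDeriv_add_neg_lt_of_mem_secondDiffLtSet hD (mem_iInter.1 hx (n, m))).trans hm

/-- **Sharp's theorem.** Every separable Baire topological linear space (a real topological
vector space, not necessarily locally convex) is Weak Asplund. -/
theorem weakAsplund_of_separable_baire (E : Type*) [AddCommGroup E] [Module ℝ E]
    [TopologicalSpace E] [IsTopologicalAddGroup E] [ContinuousSMul ℝ E] [T2Space E]
    [SeparableSpace E] [BaireSpace E] :
    IsWeakAsplund E :=
  weakAsplund_of_separable_baire_general E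
end

section
/- A real locally convex space E is a Gâteaux Differentiability Space (GDS) if and only if every continuous convex function f : E → ℝ (defined on all of E) is Gâteaux differentiable at every point of some dense subset of E. -/
open Filter Topology Bornology TopologicalSpace

/-- `E` is a Gâteaux Differentiability Space: every continuous convex function on a nonempty
open convex set `D` is Gâteaux differentiable at every point of a set dense in `D`. -/
def IsGDS (E : Type*) [AddCommGroup E] [Module ℝ E] [TopologicalSpace E] : Prop :=
  ∀ (D : Set E) (f : E → ℝ), D.Nonempty → IsOpen D → Convex ℝ D →
    ContinuousOn f D → ConvexOn ℝ D f →
    ∃ G : Set E, G ⊆ D ∧ Dense (Subtype.val ⁻¹' G : Set D) ∧ ∀ x ∈ G, GateauxDiffAt f x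

/-!
Only the passage from functions on `E` to functions on an open convex `D` needs an argument,
and it is local, since Gâteaux differentiability at a point only depends on the germ of `f`.
Near `x₀ ∈ D`, continuity and local convexity give a continuous seminorm `p` with unit ball `W`
such that `f < f x₀ + 1/2` on `B + W`, where `B = x₀ + W`. Convexity then gives
`f > f x₀ - 1/2` on `B` by symmetry, and the oscillation bound `1` over `B + W` makes `f`
`1`-Lipschitz for `p` on `B`. The inf-convolution `x ↦ ⨅ y ∈ B, f y + p (x - y)` is a continuous
convex function on all of `E` which agrees with `f` on `B`, so its dense set of Gâteaux points
yields Gâteaux points of `f` densely near `x₀`.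
-/

open Set

theorem GateauxDiffAt.congr_of_eventuallyEq {E : Type*} [AddCommGroup E] [Module ℝ E]
    [TopologicalSpace E] [ContinuousAdd E] [ContinuousSMul ℝ E] {f g : E → ℝ} {x₀ : E}
    (h : GateauxDiffAt g x₀) (hfg : f =ᶠ[𝓝 x₀] g) : GateauxDiffAt f x₀ := by
  obtain ⟨L, hL⟩ := h
  refine ⟨L, fun v ε hε => ?_⟩
  have hline : ∀ᶠ t : ℝ in 𝓝 0, f (x₀ + t • v) = g (x₀ + t • v) :=
    ((by fun_prop : Continuous fun t : ℝ => x₀ + t • v).tendsto' 0 x₀ (by simp)).eventually hfg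
  obtain ⟨δ₁, hδ₁, hδ₁line⟩ := Metric.eventually_nhds_iff.1 hline
  obtain ⟨δ, hδ, hLδ⟩ := hL v ε hε
  refine ⟨min δ δ₁, lt_min hδ hδ₁, fun t ht htδ => ?_⟩
  rw [hfg.eq_of_nhds, hδ₁line (by simpa using htδ.trans_le (min_le_right _ _))]
  exact hLδ t ht (htδ.trans_le (min_le_left _ _))

section

variable {E : Type*} [AddCommGroup E] [Module ℝ E] {p : Seminorm ℝ E}

theorem continuous_of_le_add_seminorm [TopologicalSpace E] [ContinuousSub E]
    {g : E → ℝ} (hp : Continuous p) (hg : ∀ x y, g x ≤ g y + p (x - y)) : Continuous g := by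
  refine continuous_iff_continuousAt.2 fun a => ?_
  have hpa : Tendsto (fun x => p (x - a)) (𝓝 a) (𝓝 0) := by
    simpa [Function.comp_def] using (hp.comp (continuous_sub_right a)).tendsto a
  refine tendsto_iff_dist_tendsto_zero.2 (squeeze_zero (fun _ => dist_nonneg) (fun x => ?_) hpa)
  rw [Real.dist_eq, abs_sub_le_iff]
  constructor <;> linarith [hg x a, hg a x, map_sub_rev p x a]

theorem ConvexOn.two_mul_le_add_sub {C : Set E} {f : E → ℝ} (hf : ConvexOn ℝ C f) {x v : E}
    (h₁ : x + v ∈ C) (h₂ : x - v ∈ C) : 2 * f x ≤ f (x + v) + f (x - v) := by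
  have hmid := hf.2 h₁ h₂ (by norm_num : (0 : ℝ) ≤ 1 / 2) (by norm_num : (0 : ℝ) ≤ 1 / 2)
    (by norm_num)
  rw [show (1 / 2 : ℝ) • (x + v) + (1 / 2 : ℝ) • (x - v) = x by module, smul_eq_mul,
    smul_eq_mul] at hmid
  linarith

theorem ConvexOn.le_add_seminorm {C B : Set E} {f : E → ℝ} (hf : ConvexOn ℝ C f)
    (hBC : ∀ b ∈ B, ∀ w, p w < 1 → b + w ∈ C)
    (hosc : ∀ b ∈ B, ∀ w, p w < 1 → ∀ z ∈ B, f (b + w) ≤ f z + 1)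
    {a b : E} (ha : a ∈ B) (hb : b ∈ B) : f a ≤ f b + p (a - b) := by
  refine le_of_forall_pos_le_add fun ε hε => ?_
  set s := p (a - b) + ε
  have hs₀ : 0 < s := by positivity
  set u := s⁻¹ • (a - b)
  have hu : p u < 1 := by
    rw [map_smul_eq_mul, Real.norm_of_nonneg (inv_nonneg.2 hs₀.le), inv_mul_lt_one₀ hs₀]
    exact lt_add_of_pos_right _ hε
  have hcomb : (s / (s + 1)) • (a + u) + (1 / (s + 1)) • b = a := by
    simp only [u]
    match_scalars <;> field_simp
    ring
  have hbC : b ∈ C := by simpa using hBC b hb 0 (by simp)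
  have hconv := hf.2 (hBC a ha u hu) hbC
    (by positivity : 0 ≤ s / (s + 1)) (by positivity : (0 : ℝ) ≤ 1 / (s + 1))
    (by field_simp)
  rw [hcomb, smul_eq_mul, smul_eq_mul] at hconv
  have hosc' := hosc a ha u hu b hb
  calc f a ≤ s / (s + 1) * f (a + u) + 1 / (s + 1) * f b := hconv
    _ ≤ s / (s + 1) * (f b + 1) + 1 / (s + 1) * f b := by gcongr
    _ = f b + s / (s + 1) := by field_simp; ring
    _ ≤ f b + s := by gcongr; exact div_le_self hs₀.le (by linarith)
    _ = f b + p (a - b) + ε := by ring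

namespace Seminorm

variable (p) in
noncomputable def infConv (S : Set E) (f : E → ℝ) (x : E) : ℝ :=
  ⨅ y : S, f y + p (x - y)

variable {S : Set E} {f : E → ℝ}

theorem bddBelow_range_infConv (hS : S.Nonempty)
    (hlip : ∀ a ∈ S, ∀ b ∈ S, f a ≤ f b + p (a - b)) (x : E) :
    BddBelow (range fun y : S => f y + p (x - y)) := by
  obtain ⟨y₀, hy₀⟩ := hS
  refine ⟨f y₀ - p (y₀ - x), forall_mem_range.2 fun y => ?_⟩
  have htri : p (y₀ - y) ≤ p (y₀ - x) + p (x - y) := by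
    simpa using map_add_le_add p (y₀ - x) (x - y)
  linarith [hlip y₀ hy₀ y y.2]

theorem infConv_le (hS : S.Nonempty) (hlip : ∀ a ∈ S, ∀ b ∈ S, f a ≤ f b + p (a - b))
    (x : E) {y : E} (hy : y ∈ S) : p.infConv S f x ≤ f y + p (x - y) :=
  ciInf_le (bddBelow_range_infConv hS hlip x) (⟨y, hy⟩ : S)

theorem infConv_eqOn (hlip : ∀ a ∈ S, ∀ b ∈ S, f a ≤ f b + p (a - b)) :
    EqOn (p.infConv S f) f S := by
  intro x hx
  have : Nonempty S := ⟨⟨x, hx⟩⟩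
  refine le_antisymm ?_ (le_ciInf fun y => hlip x hx y y.2)
  simpa using infConv_le ⟨x, hx⟩ hlip x hx

theorem infConv_le_add (hS : S.Nonempty) (hlip : ∀ a ∈ S, ∀ b ∈ S, f a ≤ f b + p (a - b))
    (x x' : E) : p.infConv S f x ≤ p.infConv S f x' + p (x - x') := by
  have : Nonempty S := hS.to_subtype
  suffices p.infConv S f x - p (x - x') ≤ p.infConv S f x' by linarith
  refine le_ciInf fun y => ?_
  have htri : p (x - y) ≤ p (x - x') + p (x' - y) := by
    simpa using map_add_le_add p (x - x') (x' - y)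
  linarith [infConv_le hS hlip x y.2]

theorem convexOn_infConv (hS : S.Nonempty) (hSc : Convex ℝ S) (hf : ConvexOn ℝ S f)
    (hlip : ∀ a ∈ S, ∀ b ∈ S, f a ≤ f b + p (a - b)) : ConvexOn ℝ univ (p.infConv S f) := by
  have : Nonempty S := hS.to_subtype
  refine ⟨convex_univ, fun x _ y _ a b ha hb hab => le_of_forall_pos_le_add fun ε hε => ?_⟩
  obtain ⟨u, hu⟩ : ∃ u : S, f u + p (x - u) < p.infConv S f x + ε :=
    exists_lt_of_ciInf_lt (lt_add_of_pos_right _ hε)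
  obtain ⟨v, hv⟩ : ∃ v : S, f v + p (y - v) < p.infConv S f y + ε :=
    exists_lt_of_ciInf_lt (lt_add_of_pos_right _ hε)
  have hp : p (a • x + b • y - (a • u + b • v)) ≤ a * p (x - u) + b * p (y - v) := by
    rw [show a • x + b • y - (a • u + b • v) = a • (x - u) + b • (y - v) by module]
    refine (map_add_le_add p _ _).trans_eq ?_
    rw [map_smul_eq_mul, map_smul_eq_mul, Real.norm_of_nonneg ha, Real.norm_of_nonneg hb]
  calc p.infConv S f (a • x + b • y)
      ≤ f (a • u + b • v) + p (a • x + b • y - (a • u + b • v)) :=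
        infConv_le hS hlip _ (hSc u.2 v.2 ha hb hab)
    _ ≤ (a * f u + b * f v) + (a * p (x - u) + b * p (y - v)) :=
        add_le_add (hf.2 u.2 v.2 ha hb hab) hp
    _ = a * (f u + p (x - u)) + b * (f v + p (y - v)) := by ring
    _ ≤ a * (p.infConv S f x + ε) + b * (p.infConv S f y + ε) := by gcongr
    _ = a • p.infConv S f x + b • p.infConv S f y + ε := by
        simp only [smul_eq_mul]; linear_combination ε * hab

theorem continuous_infConv [TopologicalSpace E] [ContinuousSub E] (hp : Continuous p)
    (hS : S.Nonempty) (hlip : ∀ a ∈ S, ∀ b ∈ S, f a ≤ f b + p (a - b)) :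
    Continuous (p.infConv S f) :=
  continuous_of_le_add_seminorm hp (infConv_le_add hS hlip)

end Seminorm

end

section LocallyConvex

variable {E : Type*} [AddCommGroup E] [Module ℝ E] [TopologicalSpace E] [IsTopologicalAddGroup E]
  [ContinuousSMul ℝ E] [LocallyConvexSpace ℝ E]

theorem exists_continuous_seminorm_ball_subset {U : Set E} (hU : U ∈ 𝓝 0) :
    ∃ p : Seminorm ℝ E, Continuous p ∧ p.ball 0 1 ⊆ U := by
  obtain ⟨W, ⟨hW₀, hWo, hWb, hWc⟩, hWU⟩ := (nhds_hasBasis_absConvex_open ℝ E).mem_iff.1 hU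
  let p := gaugeSeminorm hWb hWc (absorbent_nhds_zero (hWo.mem_nhds hW₀))
  have hpW : p.ball 0 1 = W := gaugeSeminorm_ball_one hWo
  exact ⟨p, Seminorm.continuous (r := 1) (hpW ▸ hWo.mem_nhds hW₀), hpW ▸ hWU⟩

theorem ConvexOn.exists_continuous_convexOn_univ_eventuallyEq {D : Set E} {f : E → ℝ}
    (hD : IsOpen D) (hfc : ConvexOn ℝ D f) (hf : ContinuousOn f D) {x₀ : E} (hx₀ : x₀ ∈ D) :
    ∃ g : E → ℝ, Continuous g ∧ ConvexOn ℝ univ g ∧ f =ᶠ[𝓝 x₀] g := by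
  have hU : ∀ᶠ v in 𝓝 (0 : E), x₀ + v ∈ D ∧ f (x₀ + v) < f x₀ + 1 / 2 := by
    have hcont : Tendsto (fun v : E => x₀ + v) (𝓝 0) (𝓝 x₀) := by
      simpa using (continuous_const_add x₀).tendsto 0
    have hlt : ∀ᶠ y in 𝓝 x₀, f y < f x₀ + 1 / 2 :=
      (hf.continuousAt (hD.mem_nhds hx₀)).eventually_lt continuousAt_const (by linarith)
    exact hcont.eventually ((hD.eventually_mem hx₀).and hlt)
  obtain ⟨V, hV, hVU⟩ := exists_nhds_zero_half hU
  obtain ⟨p, hp, hpV⟩ := exists_continuous_seminorm_ball_subset hV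
  set B := p.ball x₀ 1
  have hx₀B : x₀ ∈ B := p.mem_ball_self one_pos
  have hBU : ∀ b ∈ B, ∀ w, p w < 1 → b + w ∈ D ∧ f (b + w) < f x₀ + 1 / 2 := by
    intro b hb w hw
    rw [show b + w = x₀ + ((b - x₀) + w) by abel]
    exact hVU _ (hpV (p.mem_ball_zero.2 (p.mem_ball.1 hb))) w (hpV (p.mem_ball_zero.2 hw))
  have hBlow : ∀ z ∈ B, f x₀ - 1 / 2 < f z := by
    intro z hz
    have hv : p (z - x₀) < 1 := p.mem_ball.1 hz
    have hplus := hBU x₀ hx₀B (z - x₀) hv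
    have hminus := hBU x₀ hx₀B (-(z - x₀)) (by rwa [map_neg_eq_map])
    rw [← sub_eq_add_neg] at hminus
    have hmid := hfc.two_mul_le_add_sub hplus.1 hminus.1
    rw [add_sub_cancel] at hmid
    linarith [hminus.2]
  have hlip : ∀ a ∈ B, ∀ b ∈ B, f a ≤ f b + p (a - b) := fun a ha b hb =>
    hfc.le_add_seminorm (fun b hb w hw => (hBU b hb w hw).1)
      (fun b hb w hw z hz => by linarith [(hBU b hb w hw).2, hBlow z hz]) ha hb
  have hBD : B ⊆ D := fun b hb => by simpa using (hBU b hb 0 (by simp)).1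
  have hBne : B.Nonempty := ⟨x₀, hx₀B⟩
  have hBnhds : B ∈ 𝓝 x₀ :=
    (isOpen_lt (hp.comp (continuous_sub_right x₀)) continuous_const).mem_nhds hx₀B
  exact ⟨p.infConv B f, p.continuous_infConv hp hBne hlip,
    p.convexOn_infConv hBne (p.convex_ball _ _) (hfc.subset hBD (p.convex_ball _ _)) hlip,
    eventuallyEq_of_mem hBnhds fun x hx => (p.infConv_eqOn hlip hx).symm⟩

end LocallyConvex

theorem isGDS_iff_global_convex_gateaux_general (E : Type*) [AddCommGroup E] [Module ℝ E] [TopologicalSpace E]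
    [IsTopologicalAddGroup E] [ContinuousSMul ℝ E] [LocallyConvexSpace ℝ E] :
    IsGDS E ↔ ∀ f : E → ℝ, Continuous f → ConvexOn ℝ Set.univ f →
      ∃ G : Set E, Dense G ∧ ∀ x ∈ G, GateauxDiffAt f x := by
  refine ⟨fun h f hf hfc => ?_, fun h D f _ hD _ hf hfc => ?_⟩
  · obtain ⟨G, -, hGd, hG⟩ := h univ f univ_nonempty isOpen_univ convex_univ hf.continuousOn hfc
    rw [Subtype.dense_iff, Subtype.image_preimage_coe, univ_inter] at hGd
    exact ⟨G, fun x => hGd trivial, hG⟩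
  refine ⟨{x ∈ D | GateauxDiffAt f x}, sep_subset _ _, ?_, fun x hx => hx.2⟩
  rw [Subtype.dense_iff, Subtype.image_preimage_coe]
  intro x hx
  obtain ⟨g, hg, hgc, hfg⟩ := hfc.exists_continuous_convexOn_univ_eventuallyEq hD hf hx
  obtain ⟨T, hT, hTg⟩ := h g hg hgc
  obtain ⟨U, hUfg, hUo, hxU⟩ := eventually_nhds_iff.1 (hfg.and (hD.eventually_mem hx))
  refine closure_mono ?_ (hT.open_subset_closure_inter hUo hxU)
  rintro z ⟨hzU, hzT⟩
  have hfgz : f =ᶠ[𝓝 z] g := eventually_of_mem (hUo.mem_nhds hzU) fun y hy => (hUfg y hy).1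
  exact ⟨(hUfg z hzU).2, (hUfg z hzU).2, (hTg z hzT).congr_of_eventuallyEq hfgz⟩

/-- A real locally convex space `E` is a Gâteaux Differentiability Space if and only if every
continuous convex function `f : E → ℝ` defined on all of `E` is Gâteaux differentiable at
every point of some dense subset of `E`. -/
theorem isGDS_iff_global_convex_gateaux (E : Type*) [AddCommGroup E] [Module ℝ E] [TopologicalSpace E]
    [IsTopologicalAddGroup E] [ContinuousSMul ℝ E] [LocallyConvexSpace ℝ E] [T2Space E] :
    IsGDS E ↔ ∀ f : E → ℝ, Continuous f → ConvexOn ℝ Set.univ f →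
      ∃ G : Set E, Dense G ∧ ∀ x ∈ G, GateauxDiffAt f x :=
  isGDS_iff_global_convex_gateaux_general E
end

section
/- Let X be a Fréchet space (completely metrizable real locally convex space), Y a regular (T₃) real topological vector space, and T : X → Y a continuous linear open surjection. If X is Weak Asplund, then Y is Weak Asplund. -/
open Filter Topology Bornology TopologicalSpace

/-- A topological space is completely metrizable if its topology is induced by some complete
metric. -/
def CompletelyMetrizable (X : Type*) [t : TopologicalSpace X] : Prop :=
  ∃ m : MetricSpace X, m.toUniformSpace.toTopologicalSpace = t ∧
    @CompleteSpace X m.toUniformSpace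

/-!
Weak Asplundness of `X` applied to `f ∘ T` on `T ⁻¹' D` gives a dense `Gδ` set `S` of Gâteaux
points, and Gâteaux differentiability descends along `T`: the derivative of `f ∘ T` vanishes on
`ker T`, so it factors through the open surjection `T` as a continuous functional.

The substance is that `T '' S` contains a dense `Gδ` subset of `D`. Write `S = ⋂ Gₙ` and build
levels of balls: the balls of level `n + 1` lie in the balls of level `n` and in `Gₙ₊₁`, have
radius at most `2⁻ⁿ⁻¹`, and form a maximal family whose images under `T` are pairwise disjoint.
The unions `Hₙ` of these images are open and dense in `D`. A point `y ∈ ⋂ Hₙ` lies in exactly one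
image of each level, so the corresponding balls are nested, and completeness produces a preimage
of `y` in `S`. Finally `D` is a Baire space (as an open subset of an open continuous image of a
complete metric space), so `⋂ Hₙ` is dense in `D`.
-/

open Set Function Metric

theorem ContinuousLinearMap.exists_comp_eq_of_isOpenMap {𝕜 X Y Z : Type*} [Field 𝕜]
    [TopologicalSpace 𝕜] [AddCommGroup X] [Module 𝕜 X] [TopologicalSpace X]
    [AddCommGroup Y] [Module 𝕜 Y] [TopologicalSpace Y]
    [AddCommGroup Z] [Module 𝕜 Z] [TopologicalSpace Z]
    (T : X →L[𝕜] Y) (hTo : IsOpenMap T) (hTs : Surjective T)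
    (L : X →L[𝕜] Z) (hL : ∀ v, T v = 0 → L v = 0) :
    ∃ M : Y →L[𝕜] Z, ∀ x, M (T x) = L x := by
  obtain ⟨g, hg⟩ := T.toLinearMap.exists_rightInverse_of_surjective
    (LinearMap.range_eq_top.2 hTs)
  have hgT : ∀ x, L (g (T x)) = L x := fun x => by
    have hT : T (g (T x) - x) = 0 := by
      rw [map_sub, sub_eq_zero]; exact LinearMap.congr_fun hg (T x)
    rw [← sub_eq_zero, ← map_sub]; exact hL _ hT
  have hcont : Continuous (L.toLinearMap ∘ₗ g) :=
    (hTo.isQuotientMap T.continuous hTs).continuous_iff.2 (by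
      convert L.continuous using 1; ext x; exact hgT x)
  exact ⟨⟨L.toLinearMap ∘ₗ g, hcont⟩, hgT⟩

theorem GateauxDiffAt.of_comp {X Y : Type*} [AddCommGroup X] [Module ℝ X] [TopologicalSpace X]
    [AddCommGroup Y] [Module ℝ Y] [TopologicalSpace Y]
    {T : X →L[ℝ] Y} (hTo : IsOpenMap T) (hTs : Surjective T) {f : Y → ℝ} {x : X}
    (h : GateauxDiffAt (f ∘ T) x) : GateauxDiffAt f (T x) := by
  obtain ⟨L, hL⟩ := h
  -- along `ker T` every difference quotient of `f ∘ T` vanishes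
  have hker : ∀ v, T v = 0 → L v = 0 := by
    intro v hv
    by_contra hLv
    obtain ⟨δ, hδ, hquot⟩ := hL v |L v| (abs_pos.2 hLv)
    have := hquot (δ / 2) (by positivity) (by rw [abs_of_pos (half_pos hδ)]; linarith)
    simp [hv] at this
  obtain ⟨M, hM⟩ := T.exists_comp_eq_of_isOpenMap hTo hTs L hker
  refine ⟨M, fun w ε hε => ?_⟩
  obtain ⟨v, rfl⟩ := hTs w
  simpa [hM] using hL v ε hε

theorem exists_pairwiseDisjoint_maximal {ι α : Type*} (V : ι → Set α) (C : Set ι) :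
    ∃ D ⊆ C, D.PairwiseDisjoint V ∧ ∀ q ∈ C, (V q).Nonempty → ∃ p ∈ D, (V p ∩ V q).Nonempty := by
  obtain ⟨D, hD⟩ := zorn_subset {D | D ⊆ C ∧ D.PairwiseDisjoint V} fun c hc hchain =>
    ⟨⋃₀ c, ⟨sUnion_subset fun s hs => (hc hs).1,
      (pairwiseDisjoint_sUnion hchain.directedOn).2 fun s hs => (hc hs).2⟩,
      fun s hs => subset_sUnion_of_mem hs⟩
  refine ⟨D, hD.prop.1, hD.prop.2, fun q hqC hq => ?_⟩
  by_contra! hdisj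
  have hins : insert q D ∈ {D | D ⊆ C ∧ D.PairwiseDisjoint V} :=
    ⟨insert_subset hqC hD.prop.1, hD.prop.2.insert fun p hp _ =>
      (disjoint_iff_inter_eq_empty.2 (hdisj p hp)).symm⟩
  have hqD : q ∈ D := hD.le_of_ge hins (subset_insert q D) (mem_insert q D)
  exact hq.ne_empty (by simpa using hdisj q hqD)

namespace ResidualImage

variable {X Y : Type*} [MetricSpace X] (T : X → Y) (G : ℕ → Set X)

def IsAdmissible (n : ℕ) (S : Set X) (p : X × ℝ) : Prop :=
  0 < p.2 ∧ p.2 ≤ (1 / 2) ^ n ∧ closedBall p.1 p.2 ⊆ S ∩ G n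

noncomputable def admissibleFamily (n : ℕ) (S : Set X) : Set (X × ℝ) :=
  (exists_pairwiseDisjoint_maximal (fun p : X × ℝ => T '' ball p.1 p.2)
    {p | IsAdmissible G n S p}).choose

noncomputable def admissibleLevel : ℕ → Set (X × ℝ)
  | 0 => admissibleFamily T G 0 univ
  | n + 1 => ⋃ p ∈ admissibleLevel n, admissibleFamily T G (n + 1) (ball p.1 p.2)

variable {T G} {n : ℕ} {S : Set X} {p q : X × ℝ}

theorem IsAdmissible.mono {S' : Set X} (hp : IsAdmissible G n S' p) (h : S' ⊆ S) :
    IsAdmissible G n S p :=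
  ⟨hp.1, hp.2.1, hp.2.2.trans (inter_subset_inter_left _ h)⟩

theorem IsAdmissible.mem_image_ball (hp : IsAdmissible G n S p) : T p.1 ∈ T '' ball p.1 p.2 :=
  mem_image_of_mem T (mem_ball_self hp.1)

theorem IsAdmissible.ball_subset (hp : IsAdmissible G n S p) : ball p.1 p.2 ⊆ S ∩ G n :=
  ball_subset_closedBall.trans hp.2.2

theorem exists_isAdmissible (hG : IsOpen (G n)) (hS : IsOpen S) (hne : (S ∩ G n).Nonempty) :
    ∃ p, IsAdmissible G n S p := by
  obtain ⟨x, hx⟩ := hne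
  obtain ⟨r, hr, hball⟩ := nhds_basis_closedBall.mem_iff.1 ((hS.inter hG).mem_nhds hx)
  exact ⟨(x, min r ((1 / 2) ^ n)), lt_min hr (by positivity), min_le_right _ _,
    (closedBall_subset_closedBall (min_le_left _ _)).trans hball⟩

theorem admissibleFamily_spec : admissibleFamily T G n S ⊆ {p | IsAdmissible G n S p} ∧
    (admissibleFamily T G n S).PairwiseDisjoint (fun p => T '' ball p.1 p.2) ∧
    ∀ q ∈ {p | IsAdmissible G n S p}, (T '' ball q.1 q.2).Nonempty →
      ∃ p ∈ admissibleFamily T G n S, (T '' ball p.1 p.2 ∩ T '' ball q.1 q.2).Nonempty :=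
  (exists_pairwiseDisjoint_maximal (fun p : X × ℝ => T '' ball p.1 p.2)
    {p | IsAdmissible G n S p}).choose_spec

theorem isAdmissible_of_mem_admissibleFamily (hp : p ∈ admissibleFamily T G n S) :
    IsAdmissible G n S p :=
  admissibleFamily_spec.1 hp

theorem pairwiseDisjoint_admissibleFamily :
    (admissibleFamily T G n S).PairwiseDisjoint fun p => T '' ball p.1 p.2 :=
  admissibleFamily_spec.2.1

theorem exists_mem_admissibleFamily_inter_nonempty (hq : IsAdmissible G n S q) :
    ∃ p ∈ admissibleFamily T G n S, (T '' ball p.1 p.2 ∩ T '' ball q.1 q.2).Nonempty :=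
  admissibleFamily_spec.2.2 q hq ⟨_, hq.mem_image_ball⟩

theorem inter_iUnion_admissibleFamily_nonempty [TopologicalSpace Y] (hc : Continuous T)
    (hG : IsOpen (G n)) {U : Set X} (hUG : U ⊆ closure (G n)) {O : Set Y} (hO : IsOpen O)
    (hS : IsOpen S) (hne : (S ∩ T ⁻¹' O ∩ U).Nonempty) :
    (O ∩ ⋃ p ∈ admissibleFamily T G n S, T '' ball p.1 p.2).Nonempty := by
  obtain ⟨z, hzSO, hzU⟩ := hne
  obtain ⟨q, hq⟩ := exists_isAdmissible hG (hS.inter (hO.preimage hc))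
    (mem_closure_iff.1 (hUG hzU) _ (hS.inter (hO.preimage hc)) hzSO)
  obtain ⟨p, hp, w, hwp, hwq⟩ :=
    exists_mem_admissibleFamily_inter_nonempty (T := T) (hq.mono inter_subset_left)
  have hqO : T '' ball q.1 q.2 ⊆ O :=
    image_subset_iff.2 fun x hx => (hq.ball_subset hx).1.2
  exact ⟨w, hqO hwq, mem_biUnion hp hwp⟩

theorem exists_isAdmissible_of_mem_admissibleLevel (hp : p ∈ admissibleLevel T G n) :
    ∃ S, IsAdmissible G n S p := by
  cases n with
  | zero => exact ⟨_, isAdmissible_of_mem_admissibleFamily hp⟩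
  | succ n =>
    obtain ⟨p', -, hp⟩ := mem_iUnion₂.1 hp
    exact ⟨_, isAdmissible_of_mem_admissibleFamily hp⟩

theorem exists_parent (hq : q ∈ admissibleLevel T G (n + 1)) :
    ∃ p ∈ admissibleLevel T G n, closedBall q.1 q.2 ⊆ ball p.1 p.2 := by
  obtain ⟨p, hp, hq⟩ := mem_iUnion₂.1 hq
  exact ⟨p, hp, (isAdmissible_of_mem_admissibleFamily hq).2.2.trans inter_subset_left⟩

theorem image_ball_subset_of_closedBall_subset (h : closedBall q.1 q.2 ⊆ ball p.1 p.2) :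
    T '' ball q.1 q.2 ⊆ T '' ball p.1 p.2 :=
  image_mono (ball_subset_closedBall.trans h)

theorem pairwiseDisjoint_admissibleLevel (n : ℕ) :
    (admissibleLevel T G n).PairwiseDisjoint fun p => T '' ball p.1 p.2 := by
  induction n with
  | zero => exact pairwiseDisjoint_admissibleFamily
  | succ n ih =>
    intro q hq q' hq' hne
    obtain ⟨p, hp, hqp⟩ := mem_iUnion₂.1 hq
    obtain ⟨p', hp', hqp'⟩ := mem_iUnion₂.1 hq'
    by_cases hpp' : p = p'
    · subst hpp'
      exact pairwiseDisjoint_admissibleFamily hqp hqp' hne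
    · exact (ih hp hp' hpp').mono
        (image_ball_subset_of_closedBall_subset
          ((isAdmissible_of_mem_admissibleFamily hqp).2.2.trans inter_subset_left))
        (image_ball_subset_of_closedBall_subset
          ((isAdmissible_of_mem_admissibleFamily hqp').2.2.trans inter_subset_left))

theorem iInter_iUnion_admissibleLevel_subset [CompleteSpace X] [TopologicalSpace Y] [T1Space Y]
    (hc : Continuous T) :
    ⋂ n, ⋃ p ∈ admissibleLevel T G n, T '' ball p.1 p.2 ⊆ T '' ⋂ n, G n := by
  intro y hy
  choose p hp hyp using fun n => mem_iUnion₂.1 (mem_iInter.1 hy n)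
  choose S hS using fun n => exists_isAdmissible_of_mem_admissibleLevel (hp n)
  -- the parent of `p (n + 1)` is `p n`, since both images contain `y`
  have hnest : ∀ n, closedBall (p (n + 1)).1 (p (n + 1)).2 ⊆ ball (p n).1 (p n).2 := by
    intro n
    obtain ⟨p', hp', hsub⟩ := exists_parent (hp (n + 1))
    obtain rfl : p' = p n := (pairwiseDisjoint_admissibleLevel n).elim_set hp' (hp n) y
      (image_ball_subset_of_closedBall_subset hsub (hyp (n + 1))) (hyp n)
    exact hsub
  set F : ℕ → Set X := fun n => closedBall (p n).1 (p n).2 ∩ T ⁻¹' {y}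
  have hanti : Antitone F := antitone_nat_of_succ_le fun n =>
    inter_subset_inter_left _ ((hnest n).trans ball_subset_closedBall)
  have hF : ∀ n, (F n).Nonempty := fun n => by
    obtain ⟨z, hz, hzy⟩ := hyp n
    exact ⟨z, ball_subset_closedBall hz, hzy⟩
  have hdiam : Tendsto (fun n => diam (F n)) atTop (𝓝 0) := by
    have h2 : Tendsto (fun n : ℕ => 2 * (1 / 2 : ℝ) ^ n) atTop (𝓝 0) := by
      simpa using (tendsto_pow_atTop_nhds_zero_of_lt_one (by norm_num : (0 : ℝ) ≤ 1 / 2)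
        (by norm_num)).const_mul 2
    refine squeeze_zero (fun n => diam_nonneg) (fun n => ?_) h2
    calc diam (F n) ≤ diam (closedBall (p n).1 (p n).2) :=
          diam_mono inter_subset_left isBounded_closedBall
      _ ≤ 2 * (p n).2 := diam_closedBall (hS n).1.le
      _ ≤ 2 * (1 / 2) ^ n := by linarith [(hS n).2.1]
  obtain ⟨x, hx⟩ := nonempty_iInter_of_nonempty_biInter
    (fun n => isClosed_closedBall.inter (isClosed_singleton.preimage hc))
    (fun n => isBounded_closedBall.subset inter_subset_left)
    (fun N => (hF N).mono (subset_iInter₂ fun n hn => hanti hn)) hdiam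
  have hxF := mem_iInter.1 hx
  exact ⟨x, mem_iInter.2 fun n => ((hS n).2.2 (hxF n).1).2, (hxF 0).2⟩

theorem image_subset_closure_iUnion_admissibleLevel [TopologicalSpace Y] (hc : Continuous T)
    (hG : ∀ n, IsOpen (G n)) {U : Set X} (hGU : ∀ n, G n ⊆ U) (hUG : ∀ n, U ⊆ closure (G n))
    (n : ℕ) : T '' U ⊆ closure (⋃ p ∈ admissibleLevel T G n, T '' ball p.1 p.2) := by
  induction n with
  | zero =>
    rintro _ ⟨z, hz, rfl⟩
    exact mem_closure_iff.2 fun O hO hzO =>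
      inter_iUnion_admissibleFamily_nonempty hc (hG 0) (hUG 0) hO isOpen_univ
        ⟨z, ⟨trivial, hzO⟩, hz⟩
  | succ n ih =>
    intro y hy
    refine mem_closure_iff.2 fun O hO hyO => ?_
    obtain ⟨_, hwO, hw⟩ := mem_closure_iff.1 (ih hy) O hO hyO
    obtain ⟨p, hp, z, hz, rfl⟩ := mem_iUnion₂.1 hw
    obtain ⟨S, hS⟩ := exists_isAdmissible_of_mem_admissibleLevel hp
    obtain ⟨w, hwO', hw'⟩ := inter_iUnion_admissibleFamily_nonempty hc (hG (n + 1)) (hUG (n + 1))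
      hO isOpen_ball ⟨z, ⟨hz, hwO⟩, hGU n (hS.ball_subset hz).2⟩
    obtain ⟨q, hq, hwq⟩ := mem_iUnion₂.1 hw'
    exact ⟨w, hwO', mem_iUnion₂.2 ⟨q, mem_iUnion₂.2 ⟨p, hp, hq⟩, hwq⟩⟩

end ResidualImage

open ResidualImage in
theorem exists_isOpen_iInter_subset_image_inter {X Y : Type*} [TopologicalSpace X]
    [IsCompletelyMetrizableSpace X] [TopologicalSpace Y] [T1Space Y] {T : X → Y}
    (hc : Continuous T) (ho : IsOpenMap T) {U S : Set X} (hU : IsOpen U) (hS : IsGδ S)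
    (hUS : U ⊆ closure S) :
    ∃ H : ℕ → Set Y, (∀ n, IsOpen (H n)) ∧ (∀ n, T '' U ⊆ closure (H n)) ∧
      ⋂ n, H n ⊆ T '' (U ∩ S) := by
  let := upgradeIsCompletelyMetrizable X
  obtain ⟨G, hGo, rfl⟩ := isGδ_iff_eq_iInter_nat.1 hS
  refine ⟨fun n => ⋃ p ∈ admissibleLevel T (fun n => U ∩ G n) n, T '' ball p.1 p.2,
    fun n => isOpen_biUnion fun p _ => ho _ isOpen_ball,
    image_subset_closure_iUnion_admissibleLevel hc (fun n => hU.inter (hGo n))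
      (fun n => inter_subset_left) (fun n x hx => ?_),
    (iInter_iUnion_admissibleLevel_subset hc).trans (image_mono fun x hx => ?_)⟩
  · exact hU.inter_closure ⟨hx, closure_mono (iInter_subset _ n) (hUS hx)⟩
  · exact ⟨(mem_iInter.1 hx 0).1, mem_iInter.2 fun n => (mem_iInter.1 hx n).2⟩

theorem IsOpen.isGδ_of_isGδ_preimage_val {X : Type*} [TopologicalSpace X] {U S : Set X}
    (hU : IsOpen U) (hSU : S ⊆ U) (hS : IsGδ ((↑) ⁻¹' S : Set U)) : IsGδ S := by
  obtain ⟨f, hfo, hf⟩ := isGδ_iff_eq_iInter_nat.1 hS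
  have hSf : S = ⋂ n, ((↑) '' f n : Set X) := by
    rw [← Subtype.coe_injective.injOn.image_iInter_eq, ← hf, Subtype.image_preimage_coe,
      inter_eq_right.2 hSU]
  rw [hSf]
  exact .iInter_of_isOpen fun n => hU.isOpenMap_subtype_val _ (hfo n)

theorem dense_preimage_val_iInter {Y : Type*} [TopologicalSpace Y] [BaireSpace Y] {D : Set Y}
    (hD : IsOpen D) {H : ℕ → Set Y} (hH : ∀ n, IsOpen (H n)) (hHD : ∀ n, D ⊆ closure (H n)) :
    Dense ((↑) ⁻¹' ⋂ n, H n : Set D) := by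
  have := hD.baireSpace
  rw [preimage_iInter]
  refine dense_iInter_of_isOpen_nat (fun n => (hH n).preimage continuous_subtype_val)
    fun n => Subtype.dense_iff.2 ?_
  rw [Subtype.image_preimage_coe]
  exact fun y hy => hD.inter_closure ⟨hy, hHD n hy⟩

theorem weakAsplund_of_openSurjection_general (X Y : Type*) [AddCommGroup X] [Module ℝ X]
    [TopologicalSpace X] (hX : CompletelyMetrizable X)
    [AddCommGroup Y] [Module ℝ Y] [TopologicalSpace Y] [T3Space Y]
    (T : X →L[ℝ] Y) (hTopen : IsOpenMap T) (hTsurj : Function.Surjective T)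
    (hWA : IsWeakAsplund X) :
    IsWeakAsplund Y := by
  have : IsCompletelyMetrizableSpace X := ⟨hX⟩
  have : BaireSpace Y := IsOpenQuotientMap.baireSpace ⟨hTsurj, T.continuous, hTopen⟩
  intro D f hD hDo _ hfc hfconv
  have hUo : IsOpen (T ⁻¹' D) := hDo.preimage T.continuous
  obtain ⟨S, hSU, hSGδ, hSd, hSdiff⟩ := hWA (T ⁻¹' D) (f ∘ T) (hD.preimage hTsurj) hUo
    (hfconv.comp_linearMap T.toLinearMap).1
    (hfc.comp T.continuous.continuousOn (mapsTo_preimage _ _))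
    (hfconv.comp_linearMap T.toLinearMap)
  have hUS : T ⁻¹' D ⊆ closure S := by
    simpa [Subtype.image_preimage_coe, inter_eq_right.2 hSU] using Subtype.dense_iff.1 hSd
  obtain ⟨H, hHo, hHD, hHS⟩ := exists_isOpen_iInter_subset_image_inter T.continuous hTopen hUo
    (hUo.isGδ_of_isGδ_preimage_val hSU hSGδ) hUS
  rw [image_preimage_eq D hTsurj] at hHD
  have hH : ∀ y ∈ ⋂ n, H n, y ∈ D ∧ GateauxDiffAt f y := by
    intro y hy
    obtain ⟨x, ⟨hxD, hxS⟩, rfl⟩ := hHS hy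
    exact ⟨hxD, (hSdiff x hxS).of_comp hTopen hTsurj⟩
  exact ⟨⋂ n, H n, fun y hy => (hH y hy).1,
    (IsGδ.iInter_of_isOpen hHo).preimage continuous_subtype_val,
    dense_preimage_val_iInter hDo hHo hHD, fun y hy => (hH y hy).2⟩

/-- If `X` is a Fréchet space (completely metrizable real locally convex space), `Y` a regular
(T₃) real topological vector space, and `T : X → Y` a continuous linear open surjection, then
`X` Weak Asplund implies `Y` Weak Asplund. -/
theorem weakAsplund_of_openSurjection (X Y : Type*) [AddCommGroup X] [Module ℝ X]
    [TopologicalSpace X] [IsTopologicalAddGroup X] [ContinuousSMul ℝ X]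
    [LocallyConvexSpace ℝ X] [T2Space X] (hX : CompletelyMetrizable X)
    [AddCommGroup Y] [Module ℝ Y] [TopologicalSpace Y] [IsTopologicalAddGroup Y]
    [ContinuousSMul ℝ Y] [T3Space Y]
    (T : X →L[ℝ] Y) (hTopen : IsOpenMap T) (hTsurj : Function.Surjective T)
    (hWA : IsWeakAsplund X) :
    IsWeakAsplund Y :=
  weakAsplund_of_openSurjection_general X Y hX T hTopen hTsurj hWA
end

section
/- Let Z be a Baire topological space and 𝒰 an open cover of Z. Assume Ω ⊆ Z is a subset such that for every U ∈ 𝒰 the intersection U ∩ Ω contains a set that is dense in U and a Gδ subset of U. Then Ω contains a set that is dense in Z and a Gδ subset of Z. -/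
open Set

private lemma aux_dense_inter_open {Z : Type*} [TopologicalSpace Z] {V s : Set Z}
    (hV : IsOpen V) (h : V ⊆ closure s) : V ⊆ closure (s ∩ V) := by
  intro x hx
  rw [mem_closure_iff]
  intro N hN hxN
  have hx' : x ∈ closure s := h hx
  rcases mem_closure_iff.1 hx' (N ∩ V) (hN.inter hV) ⟨hxN, hx⟩ with ⟨y, ⟨hyN, hyV⟩, hys⟩
  exact ⟨y, hyN, hys, hyV⟩

/-- From the subtype-level hypothesis, extract a `Z`-level countable family of open sets. -/
private lemma aux_extract {Z : Type*} [TopologicalSpace Z] {U S : Set Z} (hU : IsOpen U)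
    (hS : S ⊆ U) (hG : IsGδ (Subtype.val ⁻¹' S : Set U))
    (hD : Dense (Subtype.val ⁻¹' S : Set U)) :
    ∃ g : ℕ → Set Z, (∀ n, IsOpen (g n) ∧ g n ⊆ U) ∧ (⋂ n, g n) = S ∧ U ⊆ closure S := by
  rcases (isGδ_iff_eq_iInter_nat.1 hG) with ⟨f, hf_open, hf_eq⟩
  refine ⟨fun n => Subtype.val '' f n, fun n => ⟨hU.isOpenMap_subtype_val _ (hf_open n),
      by rintro x ⟨y, -, rfl⟩; exact y.2⟩, ?_, ?_⟩
  · have : (⋂ n, Subtype.val '' f n) = Subtype.val '' ⋂ n, f n :=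
      (Subtype.val_injective.injOn.image_iInter_eq).symm
    rw [this, ← hf_eq, Subtype.image_preimage_coe, inter_eq_right.2 hS]
  · intro x hx
    have hx' : (⟨x, hx⟩ : U) ∈ closure (Subtype.val ⁻¹' S) := hD _
    rw [closure_subtype] at hx'
    rw [Subtype.image_preimage_coe, inter_eq_right.2 hS] at hx'
    exact hx'

/-- If `Z` is a Baire space, `𝒰` an open cover of `Z` and `Ω ⊆ Z` is such that for each
`U ∈ 𝒰` the set `U ∩ Ω` contains a set dense in `U` which is a `Gδ` subset of `U`, then `Ω`
contains a set dense in `Z` which is a `Gδ` subset of `Z`. -/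
theorem denseGdelta_of_locally_denseGdelta {Z : Type*} [TopologicalSpace Z] [BaireSpace Z]
    (𝒰 : Set (Set Z)) (h_open : ∀ U ∈ 𝒰, IsOpen U) (h_cover : ⋃₀ 𝒰 = Set.univ)
    (Ω : Set Z)
    (h : ∀ U ∈ 𝒰, ∃ S : Set Z, S ⊆ U ∩ Ω ∧
      IsGδ (Subtype.val ⁻¹' S : Set U) ∧ Dense (Subtype.val ⁻¹' S : Set U)) :
    ∃ S : Set Z, S ⊆ Ω ∧ IsGδ S ∧ Dense S := by
  -- Step 1: for each `U ∈ 𝒰`, a countable family of open subsets of `U` whose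
  -- intersection is contained in `Ω` and is dense in `U`.
  have key : ∀ U ∈ 𝒰, ∃ g : ℕ → Set Z, (∀ n, IsOpen (g n) ∧ g n ⊆ U) ∧
      (⋂ n, g n) ⊆ Ω ∧ U ⊆ closure (⋂ n, g n) := by
    intro U hU
    rcases h U hU with ⟨S, hSsub, hG, hD⟩
    rcases aux_extract (h_open U hU) (hSsub.trans inter_subset_left) hG hD with
      ⟨g, hg1, hg2, hg3⟩
    exact ⟨g, hg1, hg2 ▸ hSsub.trans inter_subset_right, hg2 ▸ hg3⟩
  -- Step 2: maximal pairwise disjoint family of nonempty open sets refined by `𝒰`.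
  set 𝒜 : Set (Set (Set Z)) :=
    {A | (∀ V ∈ A, IsOpen V ∧ V.Nonempty ∧ ∃ U ∈ 𝒰, V ⊆ U) ∧ A.PairwiseDisjoint id} with h𝒜
  obtain ⟨𝒱, h𝒱, hmax⟩ : ∃ 𝒱 ∈ 𝒜, ∀ A ∈ 𝒜, 𝒱 ⊆ A → A = 𝒱 := by
    have := zorn_subset 𝒜 ?_
    · rcases this with ⟨𝒱, hm⟩
      exact ⟨𝒱, hm.prop, fun A hA hsub => hm.eq_of_ge hA hsub⟩
    · intro c hc hchain
      refine ⟨⋃₀ c, ⟨?_, ?_⟩, fun A hA => subset_sUnion_of_mem hA⟩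
      · rintro V ⟨A, hA, hVA⟩
        exact (hc hA).1 V hVA
      · rintro V ⟨A, hA, hVA⟩ W ⟨B, hB, hWB⟩ hVW
        rcases hchain.total hA hB with hAB | hBA
        · exact (hc hB).2 (hAB hVA) hWB hVW
        · exact (hc hA).2 hVA (hBA hWB) hVW
  -- the union of the maximal family is dense
  have hdense : Dense (⋃₀ 𝒱) := by
    rw [dense_iff_inter_open]
    intro N hN ⟨x, hxN⟩
    by_contra hempty
    rw [not_nonempty_iff_eq_empty] at hempty
    obtain ⟨U, hU𝒰, hxU⟩ : ∃ U ∈ 𝒰, x ∈ U := by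
      have : x ∈ ⋃₀ 𝒰 := h_cover ▸ mem_univ x
      exact this
    set W : Set Z := N ∩ U with hW
    have hWne : W.Nonempty := ⟨x, hxN, hxU⟩
    have hWopen : IsOpen W := hN.inter (h_open U hU𝒰)
    have hWdisj : ∀ V ∈ 𝒱, Disjoint W V := by
      intro V hV
      rw [disjoint_iff_inter_eq_empty]
      by_contra hne
      rcases nonempty_iff_ne_empty.2 hne with ⟨y, ⟨hyN, -⟩, hyV⟩
      exact absurd hempty (nonempty_iff_ne_empty.1 ⟨y, hyN, V, hV, hyV⟩)
    have hWnotmem : W ∉ 𝒱 := by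
      intro hmem
      rcases hWne with ⟨y, hyW⟩
      exact absurd hempty (nonempty_iff_ne_empty.1 ⟨y, hyW.1, W, hmem, hyW⟩)
    have : insert W 𝒱 ∈ 𝒜 := by
      constructor
      · rintro V (rfl | hV)
        · exact ⟨hWopen, hWne, U, hU𝒰, inter_subset_right⟩
        · exact h𝒱.1 V hV
      · intro V hV V' hV' hVV'
        rcases hV with rfl | hV
        · rcases hV' with rfl | hV'
          · exact absurd rfl hVV'
          · exact hWdisj V' hV'
        · rcases hV' with rfl | hV'
          · exact (hWdisj V hV).symm
          · exact h𝒱.2 hV hV' hVV'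
    have := hmax _ this (subset_insert _ _)
    exact hWnotmem (this ▸ mem_insert W 𝒱)
  -- Step 3: choose for each `V ∈ 𝒱` a family of open sets.
  have choice : ∀ V ∈ 𝒱, ∃ g : ℕ → Set Z, (∀ n, IsOpen (g n) ∧ g n ⊆ V) ∧
      (⋂ n, g n) ⊆ Ω ∧ V ⊆ closure (⋂ n, g n) := by
    intro V hV
    obtain ⟨hVopen, -, U, hU𝒰, hVU⟩ := h𝒱.1 V hV
    rcases key U hU𝒰 with ⟨g, hg1, hg2, hg3⟩
    refine ⟨fun n => g n ∩ V, fun n => ⟨(hg1 n).1.inter hVopen, inter_subset_right⟩, ?_, ?_⟩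
    · exact (iInter_mono fun n => inter_subset_left).trans hg2
    · have : (⋂ n, g n ∩ V) = (⋂ n, g n) ∩ V := by
        rw [iInter_inter]
      rw [this]
      exact aux_dense_inter_open hVopen (hVU.trans hg3)
  -- Step 4: assemble the dense Gδ set.
  choose! F hF1 hF2 hF3 using choice
  refine ⟨⋂ n, ⋃ V ∈ 𝒱, F V n, ?_, ?_, ?_⟩
  · intro x hx
    rw [mem_iInter] at hx
    obtain ⟨V₀, hV₀, hx₀⟩ := mem_iUnion₂.1 (hx 0)
    have hxall : ∀ n, x ∈ F V₀ n := by
      intro n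
      obtain ⟨V, hV, hxV⟩ := mem_iUnion₂.1 (hx n)
      have hVeq : V = V₀ := by
        by_contra hne
        have hdisj := h𝒱.2 hV hV₀ hne
        exact (hdisj.le_bot ⟨(hF1 V hV n).2 hxV, (hF1 V₀ hV₀ 0).2 hx₀⟩ : x ∈ (⊥ : Set Z)).elim
      exact hVeq ▸ hxV
    exact hF2 V₀ hV₀ (mem_iInter.2 hxall)
  · exact IsGδ.iInter_of_isOpen fun n => isOpen_biUnion fun V hV => (hF1 V hV n).1
  · have hsub : ⋃₀ 𝒱 ⊆ closure (⋂ n, ⋃ V ∈ 𝒱, F V n) := by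
      rintro x ⟨V, hV, hxV⟩
      have h1 : (⋂ n, F V n) ⊆ ⋂ n, ⋃ V ∈ 𝒱, F V n :=
        iInter_mono fun n => subset_biUnion_of_mem (u := fun V => F V n) hV
      exact closure_mono h1 (hF3 V hV hxV)
    exact Dense.of_closure (hdense.mono hsub)
end
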